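/- Let R → S be a ring homomorphism, M an R-module, and N an S-module. Then the natural map Ext¹_S(N, Hom_R(S, M)) → Ext¹_R(N, M) is injective. In particular, if Ext¹_R(N, M) = 0 then Ext¹_S(N, Hom_R(S, M)) = 0. -/

import Mathlib

open CategoryTheory Opposite Limits

lemma lift_of_surj {A : Type} [CommRing A] {V W U : Type}
    [AddCommGroup V] [Module A V] [AddCommGroup W] [Module A W] [AddCommGroup U] [Module A U]
    (w : V →ₗ[A] W) (hw : Function.Surjective w) (f : V →ₗ[A] U)
    (h : ∀ v, w v = 0 → f v = 0) : ∃ ψ : W →ₗ[A] U, ∀ v, ψ (w v) = f v := by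
  refine ⟨((LinearMap.ker w).liftQ f (fun v hv => h v hv)).comp
    (LinearMap.quotKerEquivOfSurjective w hw).symm.toLinearMap, fun v => ?_⟩
  have : (LinearMap.quotKerEquivOfSurjective w hw).symm (w v) =
      Submodule.Quotient.mk v := by
    apply (LinearMap.quotKerEquivOfSurjective w hw).injective
    simp [LinearMap.quotKerEquivOfSurjective]

  simp [this]
  rfl

lemma subsingleton_iff_isZero {A : Type} [CommRing A] (M : ModuleCat A) :
    Subsingleton M ↔ IsZero M := by
  constructor
  · intro h; exact ModuleCat.isZero_of_subsingleton M
  · intro h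
    refine ⟨fun a b => ?_⟩
    have : (𝟙 M : M ⟶ M) = 0 := h.eq_of_src _ _
    calc a = (𝟙 M : M ⟶ M) a := rfl
    _ = (0 : M ⟶ M) a := by rw [this]
    _ = (𝟙 M : M ⟶ M) b := by rw [this]; rfl
    _ = b := rfl

lemma ext1_iff {A : Type} [CommRing A] {X Y : ModuleCat A} (P : ProjectiveResolution X) :
    Subsingleton (((Ext A (ModuleCat A) 1).obj (op X)).obj Y) ↔
      ∀ (f : P.complex.X 1 ⟶ Y), P.complex.d 2 1 ≫ f = 0 →
        ∃ g : P.complex.X 0 ⟶ Y, P.complex.d 1 0 ≫ g = f := by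
  rw [(Equiv.subsingleton_congr (P.isoExt (R := A) 1 Y).toLinearEquiv.toEquiv)]
  rw [subsingleton_iff_isZero, ← HomologicalComplex.exactAt_iff_isZero_homology,
    HomologicalComplex.exactAt_iff' _ 0 1 2 (by simp) (by simp),
    ShortComplex.moduleCat_exact_iff]
  constructor
  · intro h f hf
    obtain ⟨g, hg⟩ := h f hf
    exact ⟨g, hg⟩
  · intro h f hf
    obtain ⟨g, hg⟩ := h f hf
    exact ⟨g, hg⟩

lemma extend_of_ext1 {A : Type} [CommRing A] {X M : ModuleCat A}
    (hext : Subsingleton (((Ext A (ModuleCat A) 1).obj (op X)).obj M))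
    {Q : Type} [AddCommGroup Q] [Module A Q] (π : Q →ₗ[A] X) (hπ : Function.Surjective π)
    (φ : LinearMap.ker π →ₗ[A] M) :
    ∃ ψ : Q →ₗ[A] M, ∀ z : LinearMap.ker π, ψ z = φ z := by
  obtain ⟨P⟩ := (HasProjectiveResolution.out (Z := X))
  -- the augmentation map
  let e := HomologicalComplex.singleObjXSelf (ComplexShape.down ℕ) 0 X
  let aug : P.complex.X 0 ⟶ X := P.π.f 0 ≫ e.hom
  have haug_surj : Function.Surjective aug := by
    rw [← ModuleCat.epi_iff_surjective]
    infer_instance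
  have hd_aug : P.complex.d 1 0 ≫ aug = 0 := by
    simp only [aug]; rw [← Category.assoc, P.complex_d_comp_π_f_zero, zero_comp]
  -- lift aug through π
  let πhom : ModuleCat.of A Q ⟶ X := ModuleCat.ofHom π
  have : Epi πhom := by rwa [ModuleCat.epi_iff_surjective]
  let α : P.complex.X 0 ⟶ ModuleCat.of A Q := Projective.factorThru aug πhom
  let αl : P.complex.X 0 →ₗ[A] Q := α.hom
  have hα : ∀ p, π (αl p) = aug p := fun p =>
    congrFun (congrArg (fun (t : _ ⟶ _) => (t : _ → _)) (Projective.factorThru_comp aug πhom)) p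
  have hmem : ∀ p, aug p = 0 → αl p ∈ LinearMap.ker π := fun p hp =>
    LinearMap.mem_ker.2 (by rw [hα, hp])
  -- the cocycle
  let fc : P.complex.X 1 ⟶ M :=
    ModuleCat.ofHom (φ.comp ((LinearMap.codRestrict (LinearMap.ker π)
      (αl.comp (P.complex.d 1 0).hom)
      (fun y => hmem _ (congrFun (congrArg (fun (t : _ ⟶ _) => (t : _ → _)) hd_aug) y)))))
  have hfc : P.complex.d 2 1 ≫ fc = 0 := by
    ext y
    have h0 : P.complex.d 2 1 ≫ P.complex.d 1 0 = 0 := by simp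
    have h0' : P.complex.d 1 0 (P.complex.d 2 1 y) = 0 := by
      have := congrFun (congrArg (fun (t : _ ⟶ _) => (t : _ → _)) h0) y
      exact this
    change φ ((LinearMap.codRestrict (LinearMap.ker π) (αl ∘ₗ (P.complex.d 1 0).hom) _)
      (P.complex.d 2 1 y)) = 0
    have hz : (LinearMap.codRestrict (LinearMap.ker π) (αl ∘ₗ (P.complex.d 1 0).hom)
        (fun y => hmem _ (congrFun (congrArg (fun (t : _ ⟶ _) => (t : _ → _)) hd_aug) y)))
        (P.complex.d 2 1 y) = 0 := by
      apply Subtype.ext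
      change αl (P.complex.d 1 0 (P.complex.d 2 1 y)) = 0
      rw [h0', map_zero]
    rw [hz, map_zero]
  obtain ⟨g, hg⟩ := (ext1_iff P).1 hext fc hfc
  -- key: g agrees with φ ∘ α on elements killed by aug
  have hexact := P.exact₀
  rw [ShortComplex.moduleCat_exact_iff] at hexact
  have key : ∀ p (hp : aug p = 0), g p = φ ⟨αl p, hmem p hp⟩ := by
    intro p hp
    have hp' : P.π.f 0 p = 0 := by
      have := hp
      simp only [aug] at this
      have hi : Function.Injective e.hom := by
        rw [← ModuleCat.mono_iff_injective]; infer_instance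
      apply hi
      rw [map_zero]; exact this
    obtain ⟨y, hy⟩ := hexact p hp'
    replace hy : P.complex.d 1 0 y = p := hy
    have := congrFun (congrArg (fun (t : _ ⟶ _) => (t : _ → _)) hg) y
    change g (P.complex.d 1 0 y) = φ _ at this
    have h2 : (⟨αl p, hmem p hp⟩ : LinearMap.ker π) =
        (LinearMap.codRestrict (LinearMap.ker π) (αl ∘ₗ (P.complex.d 1 0).hom)
          (fun y => hmem _ (congrFun (congrArg (fun (t : _ ⟶ _) => (t : _ → _)) hd_aug) y))) y := by
      ext
      change αl p = αl (P.complex.d 1 0 y)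
      rw [hy]
    rw [h2, ← this, hy]
  -- now build ψ via the surjection Θ : X0 × ker π → Q
  let Θ : (P.complex.X 0 × LinearMap.ker π) →ₗ[A] Q :=
    αl.coprod (LinearMap.ker π).subtype
  have hΘ : Function.Surjective Θ := by
    intro q
    obtain ⟨p, hp⟩ := haug_surj (π q)
    refine ⟨(p, ⟨q - αl p, ?_⟩), ?_⟩
    · rw [LinearMap.mem_ker, map_sub, hα, hp, sub_self]
    · simp [Θ, LinearMap.coprod_apply]
  let Ψ : (P.complex.X 0 × LinearMap.ker π) →ₗ[A] M :=
    g.hom.coprod φ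
  obtain ⟨ψ, hψ⟩ := lift_of_surj Θ hΘ Ψ (by
    rintro ⟨p, z⟩ hv
    have hαp : αl p = -z.1 := by
      have h1 : αl p + z.1 = 0 := hv
      exact eq_neg_of_add_eq_zero_left h1
    have haugp : aug p = 0 := by
      rw [← hα, hαp]
      rw [map_neg, LinearMap.mem_ker.1 z.2, neg_zero]
    have : (⟨αl p, hmem p haugp⟩ : LinearMap.ker π) = -z := by ext; simp [hαp]
    change g p + φ z = 0
    rw [key p haugp, this]
    simp)
  refine ⟨ψ, fun z => ?_⟩
  have := hψ (0, z)
  simpa [Θ, Ψ, LinearMap.coprod_apply] using this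

/-- For a ring homomorphism `R → S`, an `R`-module `M` and an `S`-module `N`,
the natural map `Ext¹_S(N, Hom_R(S, M)) → Ext¹_R(N, M)` is injective; in particular, if
`Ext¹_R(N, M) = 0`, then `Ext¹_S(N, Hom_R(S, M)) = 0`.

Injectivity is expressed as the triviality of the kernel: an `S`-module extension
`0 → Hom_R(S, M) → E → N → 0` whose class is sent to zero — equivalently, such that the
evaluation map `Hom_R(S, M) → M` (the counit of the restriction/coextension adjunction)
extends to an `R`-linear map `E → M` — is itself split. -/
theorem ext_coextension_comparison_injective (R S : Type) [CommRing R] [CommRing S]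
    [Algebra R S] (M : Type) [AddCommGroup M] [Module R M] :
    (∀ (N E : ModuleCat S)
      (i : (ModuleCat.coextendScalars (algebraMap R S)).obj (ModuleCat.of R M) ⟶ E)
      (p : E ⟶ N), Function.Injective i → Function.Surjective p → Function.Exact i p →
      (∃ h : (ModuleCat.restrictScalars (algebraMap R S)).obj E ⟶ ModuleCat.of R M,
        (ModuleCat.restrictScalars (algebraMap R S)).map i ≫ h =
          (ModuleCat.RestrictionCoextensionAdj.counit' (algebraMap R S)).app
            (ModuleCat.of R M)) →
      ∃ r : E ⟶ (ModuleCat.coextendScalars (algebraMap R S)).obj (ModuleCat.of R M),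
        i ≫ r = 𝟙 _) ∧
    (∀ N : ModuleCat S,
      Subsingleton (((Ext R (ModuleCat R) 1).obj
        (op ((ModuleCat.restrictScalars (algebraMap R S)).obj N))).obj
          (ModuleCat.of R M)) →
      Subsingleton (((Ext S (ModuleCat S) 1).obj (op N)).obj
        ((ModuleCat.coextendScalars (algebraMap R S)).obj (ModuleCat.of R M)))) := by
  set f := algebraMap R S with hf
  constructor
  · rintro N E i p - - - ⟨h, hcomm⟩
    refine ⟨ModuleCat.RestrictionCoextensionAdj.HomEquiv.fromRestriction f h, ?_⟩
    apply ModuleCat.hom_ext; apply LinearMap.ext; intro φ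
    apply LinearMap.ext; intro s
    let s0 : S := s
    have h2 : (s0 • i φ) = i (s0 • φ) := (i.hom.map_smul s0 φ).symm
    have h3 : h (i (s0 • φ)) = (s0 • φ).toFun (1 : S) :=
      congrFun (congrArg (fun (t : _ ⟶ _) => (t : _ → _)) hcomm) (s0 • φ)
    let s' : S := s
    change h (s0 • i φ) = φ s
    rw [h2, h3]
    show φ.toFun ((1 : S) * s') = φ.toFun s'
    rw [one_mul]
  · intro N hext
    obtain ⟨P⟩ := (HasProjectiveResolution.out (Z := N))
    rw [ext1_iff P]
    intro fS hfS
    let f' : (ModuleCat.restrictScalars f).obj (P.complex.X 1) ⟶ ModuleCat.of R M :=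
      ModuleCat.RestrictionCoextensionAdj.HomEquiv.toRestriction f fS
    let e := HomologicalComplex.singleObjXSelf (ComplexShape.down ℕ) 0 N
    let aug : P.complex.X 0 ⟶ N := P.π.f 0 ≫ e.hom
    let π : ((ModuleCat.restrictScalars f).obj (P.complex.X 0)) ⟶
        ((ModuleCat.restrictScalars f).obj N) := (ModuleCat.restrictScalars f).map aug
    have haug_surj : Function.Surjective aug := by
      rw [← ModuleCat.epi_iff_surjective]; infer_instance
    have hπ : Function.Surjective π := haug_surj
    -- the map from X1 onto ker π
    let d10 : ((ModuleCat.restrictScalars f).obj (P.complex.X 1)) ⟶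
        ((ModuleCat.restrictScalars f).obj (P.complex.X 0)) :=
      (ModuleCat.restrictScalars f).map (P.complex.d 1 0)
    have hd10mem : ∀ y, d10 y ∈ LinearMap.ker π.hom := by
      intro y
      have h0 : P.complex.d 1 0 ≫ aug = 0 := by
        simp only [aug]; rw [← Category.assoc, P.complex_d_comp_π_f_zero, zero_comp]
      exact LinearMap.mem_ker.2
        (congrFun (congrArg (fun (t : _ ⟶ _) => (t : _ → _)) h0) y)
    let w : ((ModuleCat.restrictScalars f).obj (P.complex.X 1)) →ₗ[R]
        LinearMap.ker π.hom :=
      LinearMap.codRestrict _ d10.hom hd10mem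
    have hexact0 := P.exact₀
    rw [ShortComplex.moduleCat_exact_iff] at hexact0
    have hw : Function.Surjective w := by
      rintro ⟨z, hz⟩
      have hz' : P.π.f 0 z = 0 := by
        have hi : Function.Injective e.hom := by
          rw [← ModuleCat.mono_iff_injective]; infer_instance
        apply hi
        have : aug z = 0 := hz
        rw [map_zero]; exact this
      obtain ⟨y, hy⟩ := hexact0 z hz'
      exact ⟨y, Subtype.ext hy⟩
    have hexact1 := P.exact_succ 0
    rw [ShortComplex.moduleCat_exact_iff] at hexact1
    have hker : ∀ v, w v = 0 → f' v = 0 := by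
      intro v hv
      have hv' : P.complex.d 1 0 v = 0 := congrArg Subtype.val hv
      obtain ⟨u, hu⟩ := hexact1 v hv'
      replace hu : P.complex.d 2 1 u = v := hu
      have := congrFun (congrArg (fun (t : _ ⟶ _) => (t : _ → _)) hfS) u
      change fS (P.complex.d 2 1 u) = 0 at this
      have : f' (P.complex.d 2 1 u) = 0 := by
        change (fS (P.complex.d 2 1 u)) (1 : S) = 0
        rw [this]; rfl
      rw [← hu]; exact this
    obtain ⟨φ, hφ⟩ := lift_of_surj w hw f'.hom hker
    obtain ⟨ψ, hψ⟩ := extend_of_ext1 hext π.hom hπ φ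
    refine ⟨ModuleCat.RestrictionCoextensionAdj.HomEquiv.fromRestriction f (ModuleCat.ofHom (X := (ModuleCat.restrictScalars f).obj (P.complex.X 0)) ψ), ?_⟩
    apply ModuleCat.hom_ext; apply LinearMap.ext; intro y
    apply LinearMap.ext; intro s
    let s0 : S := s
    have h2 : (s0 • (P.complex.d 1 0 y) : P.complex.X 0) = P.complex.d 1 0 (s0 • y) :=
      ((P.complex.d 1 0).hom.map_smul s0 y).symm
    have h3 : ψ (P.complex.d 1 0 (s0 • y)) = φ (w (s0 • y)) := hψ (w (s0 • y))
    have h4 : φ (w (s0 • y)) = f' (s0 • y) := hφ (s0 • y)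
    have h6 : fS (s0 • y) = s0 • fS y := fS.hom.map_smul s0 y
    change ψ (s0 • (P.complex.d 1 0 y)) = (fS y) s
    rw [h2, h3, h4]
    let s' : S := s
    change (fS (s0 • y)).toFun (1 : S) = (fS y) s
    rw [h6]
    show (fS y).toFun ((1 : S) * s') = (fS y).toFun s'
    rw [one_mul]
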